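/- Let Ω ∈ RS(M) and let Ω(1) and Ω(−1) denote the strong limit values of Ω(x) as x → 1⁻ and x → −1⁺ respectively. Then the following are equivalent: (i) Ω(1)² = Ω(−1)² = I; (ii) ((Ω(1) − Ω(−1))/2)² = (Ω(1) − Ω(−1))/2 and ((Ω(1) + Ω(−1))/2)² = I − (Ω(1) − Ω(−1))/2. -/

import Mathlib

open Complex ContinuousLinearMap

noncomputable section

variable {M : Type*} [NormedAddCommGroup M] [InnerProductSpace ℂ M] [CompleteSpace M]
  [TopologicalSpace.SeparableSpace M]

/-- The domain `Z = ℂ ∖ ((−∞,−1] ∪ [1,+∞))`. -/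
def Zdom : Set ℂ := {z : ℂ | z ∉ (fun x : ℝ => (x : ℂ)) '' (Set.Iic (-1) ∪ Set.Ici 1)}

/-- The combined Nevanlinna–Schur class `RS(M)`. -/
def IsRS (Ω : ℂ → (M →L[ℂ] M)) : Prop :=
  DifferentiableOn ℂ Ω Zdom ∧
  (∀ z ∈ Zdom, Ω (starRingEnd ℂ z) = adjoint (Ω z)) ∧
  (∀ z ∈ Zdom, z.im ≠ 0 → ∀ f : M, 0 ≤ z.im * (inner ℂ f (Ω z f) : ℂ).im) ∧
  (∀ x : ℝ, -1 < x → x < 1 →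
    ((1 : M →L[ℂ] M) - Ω (x : ℂ)).IsPositive ∧ ((1 : M →L[ℂ] M) + Ω (x : ℂ)).IsPositive)

/-! On the real segment `Ω` is a monotone family of selfadjoint operators: at a real point `x`
the derivative of `⟨f, Ω(z) f⟩`, computed along the imaginary direction, has nonnegative real
part by the Nevanlinna property. Hence `Ω(-1) ≤ Ω(0) ≤ Ω(1)`, and both limits are selfadjoint.

If `Ω(±1)² = I`, then `p = (I - Ω(1))/2` and `q = (I + Ω(-1))/2` are orthogonal projections with
`p + q = I - (Ω(1) - Ω(-1))/2 ≤ I`, which forces `pq = 0`; since `(Ω(1) - Ω(-1))/2 = I - (p + q)`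
and `(Ω(1) + Ω(-1))/2 = q - p`, this gives the two identities. Conversely, writing `d` and `c` for
these two operators, `c²d = d - d² = 0`, so `cd = 0` by the C⋆-identity, and `Ω(±1) = c ± d`
square to `c² + d² = I`. -/

open Filter Topology Set

section StarAlgebra
variable {A : Type*}

lemma IsSelfAdjoint.isStarProjection_half_smul_one_add [Ring A] [StarRing A] [Algebra ℂ A]
    [StarModule ℂ A] {u : A} (hu : IsSelfAdjoint u) (hu2 : u * u = 1) :
    IsStarProjection ((2 : ℂ)⁻¹ • (1 + u)) where
  isSelfAdjoint := by simp [IsSelfAdjoint, star_smul, hu.star_eq]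
  isIdempotentElem := by
    simp only [IsIdempotentElem, smul_mul_smul_comm, mul_add, add_mul, hu2, one_mul, mul_one]
    module

lemma IsStarProjection.mul_eq_zero_of_add_le_one [CStarAlgebra A] [PartialOrder A]
    [StarOrderedRing A] {p q : A} (hp : IsStarProjection p) (hq : IsStarProjection q)
    (hpq : p + q ≤ 1) : p * q = 0 := by
  have h := (hp.le_iff_mul_eq_left hq.one_sub).mp (le_sub_iff_add_le.mpr hpq)
  rwa [mul_sub, mul_one, sub_eq_self] at h

lemma IsSelfAdjoint.mul_eq_zero_of_mul_mul_eq_zero [CStarAlgebra A] {c d : A}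
    (hc : IsSelfAdjoint c) (hd : IsSelfAdjoint d) (h : c * c * d = 0) : c * d = 0 := by
  rw [← CStarRing.star_mul_self_eq_zero_iff, star_mul, hc.star_eq, hd.star_eq, mul_assoc,
    ← mul_assoc c, h, mul_zero]

variable [CStarAlgebra A] {a b : A}

lemma half_smul_sub_idempotent_of_mul_self_eq_one [PartialOrder A] [StarOrderedRing A]
    (ha : IsSelfAdjoint a) (hb : IsSelfAdjoint b) (hba : b ≤ a) (ha2 : a * a = 1)
    (hb2 : b * b = 1) :
    ((2 : ℂ)⁻¹ • (a - b)) * ((2 : ℂ)⁻¹ • (a - b)) = (2 : ℂ)⁻¹ • (a - b) ∧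
      ((2 : ℂ)⁻¹ • (a + b)) * ((2 : ℂ)⁻¹ • (a + b)) = 1 - (2 : ℂ)⁻¹ • (a - b) := by
  set p := (2 : ℂ)⁻¹ • (1 + -a)
  set q := (2 : ℂ)⁻¹ • (1 + b)
  have hp : IsStarProjection p := ha.neg.isStarProjection_half_smul_one_add (by simpa using ha2)
  have hq : IsStarProjection q := hb.isStarProjection_half_smul_one_add hb2
  have hd : (2 : ℂ)⁻¹ • (a - b) = 1 - (p + q) := by module
  have hc : (2 : ℂ)⁻¹ • (a + b) = q - p := by module
  have hpq : p * q = 0 := by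
    refine hp.mul_eq_zero_of_add_le_one hq (sub_nonneg.mp ?_)
    rw [← hd, show (2 : ℂ)⁻¹ • (a - b) = (2 : ℝ)⁻¹ • (a - b) by norm_num [← Complex.coe_smul]]
    exact smul_nonneg (by norm_num) (sub_nonneg.mpr hba)
  have hqp : q * p = 0 := by
    simpa [hp.isSelfAdjoint.star_eq, hq.isSelfAdjoint.star_eq] using congr(star $hpq)
  refine ⟨hd ▸ (hp.add hq hpq).one_sub.isIdempotentElem, ?_⟩
  rw [hc, hd, sub_sub_cancel]
  simp only [sub_mul, mul_sub, hpq, hqp, hp.isIdempotentElem.eq, hq.isIdempotentElem.eq]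
  abel

lemma mul_self_eq_one_of_half_smul_sub_idempotent (ha : IsSelfAdjoint a) (hb : IsSelfAdjoint b)
    (hd : ((2 : ℂ)⁻¹ • (a - b)) * ((2 : ℂ)⁻¹ • (a - b)) = (2 : ℂ)⁻¹ • (a - b))
    (hc : ((2 : ℂ)⁻¹ • (a + b)) * ((2 : ℂ)⁻¹ • (a + b)) = 1 - (2 : ℂ)⁻¹ • (a - b)) :
    a * a = 1 ∧ b * b = 1 := by
  set d := (2 : ℂ)⁻¹ • (a - b)
  set c := (2 : ℂ)⁻¹ • (a + b)
  have hcs : IsSelfAdjoint c := by simp [c, IsSelfAdjoint, star_smul, ha.star_eq, hb.star_eq]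
  have hds : IsSelfAdjoint d := by simp [d, IsSelfAdjoint, star_smul, ha.star_eq, hb.star_eq]
  have hcd : c * d = 0 :=
    hcs.mul_eq_zero_of_mul_mul_eq_zero hds (by rw [hc, sub_mul, one_mul, hd, sub_self])
  have hdc : d * c = 0 := by
    simpa [hcs.star_eq, hds.star_eq] using congr(star $hcd)
  rw [show a = c + d by module, show b = c - d by module]
  constructor <;> simp only [add_mul, mul_add, sub_mul, mul_sub, hc, hd, hcd, hdc] <;> abel

theorem mul_self_eq_one_and_mul_self_eq_one_iff [PartialOrder A] [StarOrderedRing A]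
    (ha : IsSelfAdjoint a) (hb : IsSelfAdjoint b) (hba : b ≤ a) :
    (a * a = 1 ∧ b * b = 1) ↔
      (((2 : ℂ)⁻¹ • (a - b)) * ((2 : ℂ)⁻¹ • (a - b)) = (2 : ℂ)⁻¹ • (a - b) ∧
        ((2 : ℂ)⁻¹ • (a + b)) * ((2 : ℂ)⁻¹ • (a + b)) = 1 - (2 : ℂ)⁻¹ • (a - b)) :=
  ⟨fun h => half_smul_sub_idempotent_of_mul_self_eq_one ha hb hba h.1 h.2,
    fun h => mul_self_eq_one_of_half_smul_sub_idempotent ha hb h.1 h.2⟩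

end StarAlgebra

namespace ContinuousLinearMap
variable {𝕜 E : Type*} [RCLike 𝕜] [NormedAddCommGroup E] [InnerProductSpace 𝕜 E]

lemma IsPositive.of_tendsto_apply {α : Type*} {l : Filter α} [l.NeBot] {T : α → E →L[𝕜] E}
    {A : E →L[𝕜] E} (hT : ∀ᶠ i in l, (T i).IsPositive)
    (hA : ∀ f, Tendsto (fun i => T i f) l (𝓝 (A f))) : A.IsPositive := by
  refine ⟨fun f g => tendsto_nhds_unique ?_ ((tendsto_const_nhds.inner (hA g))), fun f => ?_⟩
  · exact ((hA f).inner tendsto_const_nhds).congr'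
      (hT.mono fun i hi => hi.inner_left_eq_inner_right f g)
  · exact ge_of_tendsto ((RCLike.continuous_re.tendsto _).comp ((hA f).inner tendsto_const_nhds))
      (hT.mono fun i hi => hi.re_inner_nonneg_left f)

variable {a b x : ℝ} {F : ℝ → E →L[𝕜] E} {A : E →L[𝕜] E}

lemma _root_.MonotoneOn.le_of_tendsto_apply_nhdsLT (hF : MonotoneOn F (Ioo a b))
    (hx : x ∈ Ioo a b) (hA : ∀ f, Tendsto (fun t => F t f) (𝓝[<] b) (𝓝 (A f))) : F x ≤ A :=
  IsPositive.of_tendsto_apply (T := fun t => F t - F x)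
    (eventually_of_mem (Ioo_mem_nhdsLT hx.2) fun _ ht => hF hx ⟨hx.1.trans ht.1, ht.2⟩ ht.1.le)
    fun f => (hA f).sub_const (F x f)

lemma _root_.MonotoneOn.le_of_tendsto_apply_nhdsGT (hF : MonotoneOn F (Ioo a b))
    (hx : x ∈ Ioo a b) (hA : ∀ f, Tendsto (fun t => F t f) (𝓝[>] a) (𝓝 (A f))) : A ≤ F x :=
  IsPositive.of_tendsto_apply (T := fun t => F x - F t)
    (eventually_of_mem (Ioo_mem_nhdsGT hx.1) fun _ ht => hF ⟨ht.1, ht.2.trans hx.2⟩ hx ht.2.le)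
    fun f => (hA f).const_sub (F x f)

end ContinuousLinearMap

lemma Complex.re_nonneg_of_hasDerivAt_of_im_nonneg {φ : ℂ → ℂ} {φ' : ℂ} {x : ℝ}
    (hφ : HasDerivAt φ φ' x) (hx : (φ x).im = 0)
    (him : ∀ᶠ y : ℝ in 𝓝[>] 0, 0 ≤ (φ (x + y * I)).im) : 0 ≤ φ'.re := by
  have hline : HasDerivAt (fun w : ℂ => x + w * I) I ((0 : ℝ) : ℂ) := by
    simpa using ((hasDerivAt_id _).mul_const I).const_add (x : ℂ)
  have hslope := (continuous_im.tendsto _).comp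
    ((hφ.comp_of_eq _ hline (by simp)).comp_ofReal.tendsto_slope_zero_right)
  simp only [Function.comp_def, zero_add, ofReal_zero, zero_mul, add_zero, mul_im, I_re, mul_zero,
    I_im, mul_one] at hslope
  refine ge_of_tendsto hslope ?_
  filter_upwards [him, self_mem_nhdsWithin] with y hy (hy0 : 0 < y)
  rw [real_smul, im_ofReal_mul, sub_im, hx, sub_zero]
  positivity

lemma isOpen_Zdom : IsOpen Zdom :=
  (isometry_ofReal.isClosedEmbedding.isClosedMap _ (isClosed_Iic.union isClosed_Ici)).isOpen_compl

lemma mem_Zdom_of_im_ne_zero {z : ℂ} (hz : z.im ≠ 0) : z ∈ Zdom := by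
  rintro ⟨x, -, rfl⟩
  exact hz (ofReal_im x)

lemma ofReal_mem_Zdom {x : ℝ} (hx : x ∈ Ioo (-1) 1) : (x : ℂ) ∈ Zdom := by
  rintro ⟨t, ht, hxt⟩
  obtain rfl : t = x := ofReal_injective hxt
  rcases ht with h | h
  · exact (not_le.mpr hx.1) h
  · exact (not_le.mpr hx.2) h

section
omit [TopologicalSpace.SeparableSpace M]

namespace IsRS
variable {Ω : ℂ → (M →L[ℂ] M)} (hRS : IsRS Ω)
include hRS

lemma isSelfAdjoint_apply_ofReal {x : ℝ} (hx : x ∈ Ioo (-1) 1) : IsSelfAdjoint (Ω x) := by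
  simpa using (IsSelfAdjoint.one _).sub (hRS.2.2.2 x hx.1 hx.2).1.isSelfAdjoint

lemma monotoneOn_re_inner (f : M) :
    MonotoneOn (fun x : ℝ => (inner ℂ f (Ω x f)).re) (Ioo (-1) 1) := by
  set φ : ℂ → ℂ := fun z => inner ℂ f (Ω z f)
  have hφ : ∀ x ∈ Ioo (-1 : ℝ) 1, HasDerivAt φ (deriv φ x) x := fun x hx =>
    (((innerSL ℂ f).differentiable.comp_differentiableOn
      (hRS.1.clm_apply (differentiableOn_const f))).differentiableAt
      (isOpen_Zdom.mem_nhds (ofReal_mem_Zdom hx))).hasDerivAt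
  refine monotoneOn_of_hasDerivWithinAt_nonneg (convex_Ioo _ _)
    (fun x hx => (hφ x hx).real_of_complex.continuousAt.continuousWithinAt)
    (fun x hx => (hφ x (interior_subset hx)).real_of_complex.hasDerivWithinAt) fun x hx => ?_
  rw [interior_Ioo] at hx
  refine re_nonneg_of_hasDerivAt_of_im_nonneg (hφ x hx) ?_ ?_
  · exact (hRS.isSelfAdjoint_apply_ofReal hx).isSymmetric.im_inner_self_apply f
  · filter_upwards [self_mem_nhdsWithin] with y (hy : 0 < y)
    have hz : (x + y * I).im ≠ 0 := by simpa using hy.ne'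
    have hnev := hRS.2.2.1 _ (mem_Zdom_of_im_ne_zero hz) hz f
    simp only [add_im, ofReal_im, mul_im, ofReal_re, I_im, mul_one, I_re, mul_zero, zero_add,
      add_zero] at hnev
    exact nonneg_of_mul_nonneg_right hnev hy

lemma monotoneOn_comp_ofReal : MonotoneOn (fun x : ℝ => Ω x) (Ioo (-1) 1) := by
  intro x hx y hy hxy
  refine ContinuousLinearMap.isPositive_def'.mpr ⟨(hRS.isSelfAdjoint_apply_ofReal hy).sub
    (hRS.isSelfAdjoint_apply_ofReal hx), fun f => ?_⟩
  simp only [ContinuousLinearMap.reApplyInnerSelf_apply, sub_apply, inner_sub_left, map_sub,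
    sub_nonneg, inner_re_symm (Ω _ f)]
  exact hRS.monotoneOn_re_inner f hx hy hxy

end IsRS

end

/-- For `Ω ∈ RS(M)` with strong limit values `Ω(1)` (as `x → 1⁻`) and
`Ω(−1)` (as `x → −1⁺`), one has `Ω(1)² = Ω(−1)² = I` if and only if
`((Ω(1) − Ω(−1))/2)² = (Ω(1) − Ω(−1))/2` and `((Ω(1) + Ω(−1))/2)² = I − (Ω(1) − Ω(−1))/2`. -/
theorem limit_values_square_identity (Ω : ℂ → (M →L[ℂ] M)) (hRS : IsRS Ω)
    (A1 Am1 : M →L[ℂ] M)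
    (hA1 : ∀ f : M, Filter.Tendsto (fun x : ℝ => Ω (x : ℂ) f)
      (nhdsWithin 1 (Set.Iio 1)) (nhds (A1 f)))
    (hAm1 : ∀ f : M, Filter.Tendsto (fun x : ℝ => Ω (x : ℂ) f)
      (nhdsWithin (-1) (Set.Ioi (-1))) (nhds (Am1 f))) :
    (A1 * A1 = 1 ∧ Am1 * Am1 = 1) ↔
      (((2 : ℂ)⁻¹ • (A1 - Am1)) * ((2 : ℂ)⁻¹ • (A1 - Am1)) = (2 : ℂ)⁻¹ • (A1 - Am1) ∧
       ((2 : ℂ)⁻¹ • (A1 + Am1)) * ((2 : ℂ)⁻¹ • (A1 + Am1)) = 1 - (2 : ℂ)⁻¹ • (A1 - Am1)) := by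
  have h0 : (0 : ℝ) ∈ Ioo (-1) 1 := by norm_num
  have hle1 : Ω (0 : ℝ) ≤ A1 := hRS.monotoneOn_comp_ofReal.le_of_tendsto_apply_nhdsLT h0 hA1
  have hle2 : Am1 ≤ Ω (0 : ℝ) := hRS.monotoneOn_comp_ofReal.le_of_tendsto_apply_nhdsGT h0 hAm1
  have hsa0 := hRS.isSelfAdjoint_apply_ofReal h0
  have hsa1 : IsSelfAdjoint A1 := by
    simpa using (IsSelfAdjoint.of_nonneg (sub_nonneg.mpr hle1)).add hsa0
  have hsam1 : IsSelfAdjoint Am1 := by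
    simpa using hsa0.sub (IsSelfAdjoint.of_nonneg (sub_nonneg.mpr hle2))
  exact mul_self_eq_one_and_mul_self_eq_one_iff hsa1 hsam1 (hle2.trans hle1)
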